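/- Let n ≥ 2 and U ⊆ ℕⁿ \ {0}. Then R[[x^U]]ⁿ is a submonoid of the monoid of n-tuples of formal power series with zero constant term under substitution composition (for all rings R, equivalently for R = ℤ) if and only if T = { |u| : u ∈ U } is a strongly closed subset of ℕ* and U = { u ∈ ℕⁿ \ {0} : |u| ∈ T }. -/

import Mathlib

/-- Coordinatewise substitution composition of multivariate power series (the genuine
composition when each `g i` has zero constant term): coefficient of `f(g 1, ..., g n)`
at multidegree `d`. -/
noncomputable def mvComp {n : ℕ} {R : Type*} [CommRing R]
    (f : MvPowerSeries (Fin n) R) (g : Fin n → MvPowerSeries (Fin n) R) :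
    MvPowerSeries (Fin n) R :=
  fun d =>
    ∑ e ∈ Finset.Iic (Finsupp.equivFunOnFinite.symm fun _ => d.sum fun _ m => m),
      (MvPowerSeries.coeff e f) * MvPowerSeries.coeff d (∏ i, (g i) ^ (e i))

/-- `f` is supported on monomials `x^u` with `u ∈ U`. -/
def MvSupported {n : ℕ} {R : Type*} [CommRing R] (U : Set (Fin n →₀ ℕ))
    (f : MvPowerSeries (Fin n) R) : Prop :=
  ∀ d, MvPowerSeries.coeff d f ≠ 0 → d ∈ U

/-- `T` is a strongly closed subset of the positive integers. -/
def StronglyClosed (T : Set ℕ) : Prop :=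
  (∀ t ∈ T, 0 < t) ∧ 1 ∈ T ∧ ∀ s ∈ T, ∀ t ∈ T, s + t - 1 ∈ T

namespace Stmt14Aux

open MvPowerSeries Finset

variable {n : ℕ}

/-- the norm (total degree) of a multi-index -/
def nrm (u : Fin n →₀ ℕ) : ℕ := u.sum fun _ m => m

lemma nrm_eq_sum (u : Fin n →₀ ℕ) : nrm u = ∑ l, u l := by
  rw [nrm, Finsupp.sum_fintype]; intro i; rfl

lemma nrm_add (u v : Fin n →₀ ℕ) : nrm (u + v) = nrm u + nrm v := by
  simp [nrm_eq_sum, Finset.sum_add_distrib]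

lemma nrm_zero : nrm (0 : Fin n →₀ ℕ) = 0 := by simp [nrm_eq_sum]

lemma nrm_single (i : Fin n) (k : ℕ) : nrm (Finsupp.single i k) = k := by
  simp [nrm, Finsupp.sum_single_index]

lemma nrm_eq_zero {u : Fin n →₀ ℕ} : nrm u = 0 ↔ u = 0 := by
  rw [nrm_eq_sum]
  constructor
  · intro h
    ext l
    have := Finset.sum_eq_zero_iff.mp h l (mem_univ l)
    simpa using this
  · rintro rfl; simp

lemma coord_le_nrm (u : Fin n →₀ ℕ) (l : Fin n) : u l ≤ nrm u := by
  rw [nrm_eq_sum]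
  exact Finset.single_le_sum (fun i _ => Nat.zero_le _) (mem_univ l)

lemma single_one_ne_zero (i : Fin n) : Finsupp.single i 1 ≠ (0 : Fin n →₀ ℕ) :=
  fun h => one_ne_zero (Finsupp.single_eq_zero.mp h)

lemma nrm_list_sum (c : List (Fin n →₀ ℕ)) : nrm c.sum = (c.map nrm).sum := by
  induction c with
  | nil => simp [nrm_zero]
  | cons x c ih => simp [nrm_add, ih]

section R
variable {R : Type*} [CommRing R]

lemma monomial_pow (v : Fin n →₀ ℕ) (k : ℕ) :
    (MvPowerSeries.monomial (R := R) v 1) ^ k = MvPowerSeries.monomial (R := R) (k • v) 1 := by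
  induction k with
  | zero => simp [MvPowerSeries.monomial_zero_one]
  | succ k ih =>
      rw [pow_succ, ih, MvPowerSeries.monomial_mul_monomial, succ_nsmul, mul_one]

lemma prod_monomial {ι : Type*} (s : Finset ι) (σ : ι → (Fin n →₀ ℕ)) :
    (∏ l ∈ s, MvPowerSeries.monomial (R := R) (σ l) 1) =
      MvPowerSeries.monomial (R := R) (∑ l ∈ s, σ l) 1 := by
  classical
  induction s using Finset.induction with
  | empty => simp [MvPowerSeries.monomial_zero_one]
  | insert a s hx ih =>
      rw [Finset.prod_insert hx, ih, MvPowerSeries.monomial_mul_monomial,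
        Finset.sum_insert hx, mul_one]

lemma X_eq (i : Fin n) :
    (MvPowerSeries.X i : MvPowerSeries (Fin n) R) =
      MvPowerSeries.monomial (R := R) (Finsupp.single i 1) 1 := by
  rw [← pow_one (MvPowerSeries.X i : MvPowerSeries (Fin n) R), MvPowerSeries.X_pow_eq]

/-- coefficient of `mvComp (monomial u 1) g` at `d` when every `u l ≤ nrm d`. -/
lemma coeff_mvComp_monomial (u d : Fin n →₀ ℕ) (g : Fin n → MvPowerSeries (Fin n) R)
    (hle : ∀ l, u l ≤ nrm d) :
    MvPowerSeries.coeff (R := R) d (mvComp (MvPowerSeries.monomial (R := R) u 1) g) =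
      MvPowerSeries.coeff (R := R) d (∏ l, (g l) ^ (u l)) := by
  rw [MvPowerSeries.coeff_apply]
  show (∑ e ∈ Finset.Iic (Finsupp.equivFunOnFinite.symm fun _ => d.sum fun _ m => m),
      (MvPowerSeries.coeff (R := R) e (MvPowerSeries.monomial (R := R) u 1)) *
        MvPowerSeries.coeff (R := R) d (∏ i, (g i) ^ (e i))) = _
  rw [Finset.sum_eq_single u]
  · rw [MvPowerSeries.coeff_monomial, if_pos rfl, one_mul]
  · intro e _ he
    rw [MvPowerSeries.coeff_monomial, if_neg he, zero_mul]
  · intro hu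
    exfalso
    apply hu
    rw [Finset.mem_Iic, Finsupp.le_def]
    intro l
    simpa [nrm] using hle l
end R

/-- The key coefficient computation over ℤ. -/
lemma key_coeff (u v : Fin n →₀ ℕ) (i : Fin n) (hi : 1 ≤ u i) (hv0 : v ≠ 0)
    (hvi : v ≠ Finsupp.single i 1) :
    MvPowerSeries.coeff (R := ℤ) (u - Finsupp.single i 1 + v)
      (∏ l, (if l = i then MvPowerSeries.X i + MvPowerSeries.monomial (R := ℤ) v 1
             else MvPowerSeries.X l) ^ (u l)) = (u i : ℤ) := by
  classical
  set m := u i with hm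
  set w : Fin n →₀ ℕ := ∑ l ∈ Finset.univ.erase i, Finsupp.single l (u l) with hw
  have hwl : ∀ l, l ≠ i → w l = u l := by
    intro l hl
    rw [hw]
    rw [Finsupp.finset_sum_apply]
    rw [Finset.sum_eq_single l]
    · simp
    · intro b _ hb; exact Finsupp.single_eq_of_ne' hb
    · intro h; exact absurd (Finset.mem_erase.mpr ⟨hl, Finset.mem_univ l⟩) h
  have hwi : w i = 0 := by
    rw [hw, Finsupp.finset_sum_apply]
    apply Finset.sum_eq_zero
    intro b hb
    exact Finsupp.single_eq_of_ne' (Finset.mem_erase.mp hb).1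
  have hu : u = Finsupp.single i m + w := by
    ext l
    by_cases hl : l = i
    · subst hl; simp [hwi, hm]
    · simp [Finsupp.single_apply, Ne.symm hl, hwl l hl]
  have hd : u - Finsupp.single i 1 + v = Finsupp.single i (m - 1) + v + w := by
    ext l
    by_cases hl : l = i
    · subst hl
      simp [Finsupp.tsub_apply, Finsupp.single_apply, hwi, hm]
    · simp only [Finsupp.coe_add, Pi.add_apply, Finsupp.tsub_apply,
        Finsupp.single_apply, if_neg (Ne.symm hl), hwl l hl]
      omega
  -- rewrite the product
  have hprod : (∏ l, (if l = i then MvPowerSeries.X i + MvPowerSeries.monomial (R := ℤ) v 1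
             else MvPowerSeries.X l) ^ (u l))
      = (MvPowerSeries.X i + MvPowerSeries.monomial (R := ℤ) v 1) ^ m *
          MvPowerSeries.monomial (R := ℤ) w 1 := by
    rw [← Finset.mul_prod_erase Finset.univ _ (Finset.mem_univ i), if_pos rfl, ← hm]
    congr 1
    rw [hw, ← prod_monomial]
    apply Finset.prod_congr rfl
    intro l hl
    rw [if_neg (Finset.mem_erase.mp hl).1, MvPowerSeries.X_pow_eq]
  rw [hprod, hd]
  -- expand the binomial
  rw [add_pow]
  rw [Finset.sum_mul]
  have hterm : ∀ k, (MvPowerSeries.X i : MvPowerSeries (Fin n) ℤ) ^ k *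
      (MvPowerSeries.monomial (R := ℤ) v 1) ^ (m - k) * (m.choose k : MvPowerSeries (Fin n) ℤ) *
      MvPowerSeries.monomial (R := ℤ) w 1
      = MvPowerSeries.monomial (R := ℤ) (Finsupp.single i k + (m - k) • v + w) (m.choose k : ℤ) := by
    intro k
    have hcast : ((m.choose k : ℕ) : MvPowerSeries (Fin n) ℤ) =
        MvPowerSeries.monomial (R := ℤ) 0 ((m.choose k : ℕ) : ℤ) := by
      rw [MvPowerSeries.monomial_zero_eq_C_apply, map_natCast]
    rw [MvPowerSeries.X_pow_eq, monomial_pow, hcast,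
      MvPowerSeries.monomial_mul_monomial, MvPowerSeries.monomial_mul_monomial,
      MvPowerSeries.monomial_mul_monomial]
    congr 1
    · simp
    · ring
  rw [map_sum]
  have hc : ∀ k ∈ Finset.range (m + 1),
      MvPowerSeries.coeff (R := ℤ) (Finsupp.single i (m - 1) + v + w)
        ((MvPowerSeries.X i : MvPowerSeries (Fin n) ℤ) ^ k *
          (MvPowerSeries.monomial (R := ℤ) v 1) ^ (m - k) * (m.choose k : MvPowerSeries (Fin n) ℤ) *
          MvPowerSeries.monomial (R := ℤ) w 1)
      = if k = m - 1 then (m.choose (m-1) : ℤ) else 0 := by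
    intro k hk
    rw [Finset.mem_range] at hk
    have hk' : k ≤ m := by omega
    rw [hterm k, MvPowerSeries.coeff_monomial]
    by_cases hkm : k = m - 1
    · subst hkm
      rw [if_pos, if_pos rfl]
      have : m - (m - 1) = 1 := by omega
      rw [this, one_smul]
    · rw [if_neg hkm, if_neg]
      intro heq
      apply hkm
      -- derive k = m - 1 from the equality
      have heq' : Finsupp.single i (m - 1) + v = Finsupp.single i k + (m - k) • v :=
        add_right_cancel heq
      set j := m - k with hj
      suffices hjs : j = 1 by omega
      by_contra hj1
      -- for l ≠ i, v l = j * v l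
      have hvl : ∀ l, l ≠ i → v l = 0 := by
        intro l hl
        have h1 := congrFun (congrArg (fun f : Fin n →₀ ℕ => (f : Fin n → ℕ)) heq') l
        simp only [Finsupp.coe_add, Pi.add_apply, Finsupp.smul_apply, smul_eq_mul,
          Finsupp.single_apply, if_neg (Ne.symm hl)] at h1
        -- h1 : 0 + v l = 0 + j * v l
        by_contra hvl0
        have hvl1 : 1 ≤ v l := Nat.one_le_iff_ne_zero.mpr hvl0
        rcases Nat.lt_or_ge j 1 with hj0 | hjge
        · have hj0' : j = 0 := by omega
          rw [hj0', zero_mul] at h1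
          omega
        · have hj2 : 2 ≤ j := by omega
          simp only [zero_add] at h1
          nlinarith
      have hvsing : v = Finsupp.single i (v i) := by
        ext l
        by_cases hl : l = i
        · subst hl; simp
        · rw [Finsupp.single_eq_of_ne' (Ne.symm hl)]; exact hvl l hl
      have hvi2 : 2 ≤ v i := by
        have h0 : v i ≠ 0 := fun h => hv0 (by rw [hvsing, h, Finsupp.single_zero])
        have h1 : v i ≠ 1 := fun h => hvi (by rw [hvsing, h])
        omega
      -- coordinate i
      have h1 := congrFun (congrArg (fun f : Fin n →₀ ℕ => (f : Fin n → ℕ)) heq') i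
      simp only [Finsupp.coe_add, Pi.add_apply, Finsupp.smul_apply, smul_eq_mul,
        Finsupp.single_eq_same] at h1
      -- h1 : (m-1) + v i = k + j * v i
      set a := v i with ha
      rcases Nat.eq_zero_or_pos j with hj0 | hjpos
      · rw [hj0, zero_mul] at h1
        omega
      · have e1 : 2 * a ≤ j * a := Nat.mul_le_mul_right a (by omega)
        have e2 : 2 * j ≤ j * a := by
          calc 2 * j = j * 2 := by ring
          _ ≤ j * a := Nat.mul_le_mul_left j hvi2
        omega
  rw [Finset.sum_congr rfl hc, Finset.sum_ite_eq' (Finset.range (m+1)) (m-1)]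
  rw [if_pos (by rw [Finset.mem_range]; omega)]
  have hch : m.choose (m-1) = m := by
    have h2 := Nat.choose_symm (Nat.sub_le m 1)
    have h3 : m - (m - 1) = 1 := by omega
    rw [h3, Nat.choose_one_right] at h2
    omega
  rw [hch]

/-- The move lemma: replace one unit of `u` at coordinate `i` by `v`. -/
lemma move (U : Set (Fin n →₀ ℕ))
    (hcomp : ∀ f g : Fin n → MvPowerSeries (Fin n) ℤ,
        (∀ i, MvSupported U (f i)) → (∀ i, MvSupported U (g i)) →
        ∀ i, MvSupported U (mvComp (f i) g))
    (hXU : ∀ l : Fin n, Finsupp.single l 1 ∈ U)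
    (i : Fin n) {u v : Fin n →₀ ℕ} (hu : u ∈ U) (hv : v ∈ U) (hv0 : v ≠ 0)
    (hi : 1 ≤ u i) :
    u - Finsupp.single i 1 + v ∈ U := by
  classical
  by_cases hvi : v = Finsupp.single i 1
  · subst hvi
    rwa [tsub_add_cancel_of_le (Finsupp.single_le_iff.mpr hi)]
  · set d := u - Finsupp.single i 1 + v with hdd
    have h1 : u - Finsupp.single i 1 + Finsupp.single i 1 = u :=
      tsub_add_cancel_of_le (Finsupp.single_le_iff.mpr hi)
    have h2 : nrm (u - Finsupp.single i 1) + 1 = nrm u := by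
      conv_rhs => rw [← h1]
      rw [nrm_add, nrm_single]
    have h3 : nrm d = nrm (u - Finsupp.single i 1) + nrm v := nrm_add _ _
    have h4 : nrm v ≠ 0 := fun h => hv0 (nrm_eq_zero.mp h)
    have hnd : ∀ l, u l ≤ nrm d := by
      intro l
      have := coord_le_nrm u l
      omega
    have hne : MvPowerSeries.coeff (R := ℤ) d
        (mvComp (MvPowerSeries.monomial (R := ℤ) u 1)
          (fun l => if l = i then MvPowerSeries.X i + MvPowerSeries.monomial (R := ℤ) v 1
            else MvPowerSeries.X l)) ≠ 0 := by
      rw [coeff_mvComp_monomial u d _ hnd]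
      have hk := key_coeff u v i hi hv0 hvi
      rw [hdd]
      rw [show (∏ l, ((fun l => if l = i then MvPowerSeries.X i +
              MvPowerSeries.monomial (R := ℤ) v 1 else MvPowerSeries.X l) l) ^ (u l)) =
          (∏ l, (if l = i then MvPowerSeries.X i + MvPowerSeries.monomial (R := ℤ) v 1
             else MvPowerSeries.X l) ^ (u l)) from rfl, hk]
      have : (0:ℤ) < (u i : ℤ) := by exact_mod_cast hi
      omega
    refine hcomp (fun _ => MvPowerSeries.monomial (R := ℤ) u 1) _ ?_ ?_ i d hne
    · intro _ d' hd'
      rw [MvPowerSeries.coeff_monomial] at hd'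
      by_cases h : d' = u
      · rwa [h]
      · rw [if_neg h] at hd'; exact absurd rfl hd'
    · intro l d' hd'
      by_cases hl : l = i
      · subst hl
        rw [if_pos rfl, map_add] at hd'
        by_cases ha : d' = Finsupp.single l 1
        · rw [ha]; exact hXU l
        by_cases hb : d' = v
        · rwa [hb]
        exfalso
        apply hd'
        rw [MvPowerSeries.coeff_X, MvPowerSeries.coeff_monomial, if_neg ha, if_neg hb,
          add_zero]
      · rw [if_neg hl, MvPowerSeries.coeff_X] at hd'
        by_cases ha : d' = Finsupp.single l 1
        · rw [ha]; exact hXU l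
        · rw [if_neg ha] at hd'; exact absurd rfl hd'

/-- Connectivity: any nonzero `w` with the same norm as some `u ∈ U` lies in `U`. -/
lemma reach (U : Set (Fin n →₀ ℕ))
    (hcomp : ∀ f g : Fin n → MvPowerSeries (Fin n) ℤ,
        (∀ i, MvSupported U (f i)) → (∀ i, MvSupported U (g i)) →
        ∀ i, MvSupported U (mvComp (f i) g))
    (hXU : ∀ l : Fin n, Finsupp.single l 1 ∈ U) :
    ∀ N (u w : Fin n →₀ ℕ), (∑ l, (w l - u l)) = N → u ∈ U → w ≠ 0 →
      nrm u = nrm w → w ∈ U := by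
  intro N
  induction N using Nat.strong_induction_on with
  | _ N ih =>
    intro u w hN hu hw0 hnrm
    by_cases huw : u = w
    · rwa [← huw]
    · have hsum : ∑ l, u l = ∑ l, w l := by
        rw [← nrm_eq_sum, ← nrm_eq_sum, hnrm]
      have hj : ∃ j, u j < w j := by
        by_contra h
        push_neg at h
        have := (Finset.sum_eq_sum_iff_of_le (fun l _ => h l)).mp hsum.symm
        exact huw (by ext l; exact (this l (Finset.mem_univ l)).symm)
      obtain ⟨j, hjlt⟩ := hj
      have hi : ∃ i, w i < u i := by
        by_contra h
        push_neg at h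
        have := Finset.sum_lt_sum (fun l _ => h l)
          ⟨j, Finset.mem_univ j, hjlt⟩
        omega
      obtain ⟨i, hilt⟩ := hi
      have hij : i ≠ j := by intro h; rw [h] at hilt; omega
      set u' := u - Finsupp.single i 1 + Finsupp.single j 1 with hu'
      have hu'mem : u' ∈ U :=
        move U hcomp hXU i hu (hXU j)
          (single_one_ne_zero j) (by omega)
      have hci : u' i = u i - 1 := by
        rw [hu', Finsupp.add_apply, Finsupp.tsub_apply, Finsupp.single_eq_same,
          Finsupp.single_eq_of_ne' (Ne.symm hij), add_zero]
      have hcj : u' j = u j + 1 := by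
        rw [hu', Finsupp.add_apply, Finsupp.tsub_apply,
          Finsupp.single_eq_of_ne' hij, Finsupp.single_eq_same]
        omega
      have hcl : ∀ l, l ≠ i → l ≠ j → u' l = u l := by
        intro l hli hlj
        rw [hu', Finsupp.add_apply, Finsupp.tsub_apply,
          Finsupp.single_eq_of_ne' (Ne.symm hli), Finsupp.single_eq_of_ne' (Ne.symm hlj)]
        omega
      have hNpos : 1 ≤ N := by
        have : w j - u j ≤ ∑ l, (w l - u l) :=
          Finset.single_le_sum (f := fun l => w l - u l)
            (fun l _ => Nat.zero_le _) (Finset.mem_univ j)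
        omega
      have hdec : ∑ l, (w l - u' l) = N - 1 := by
        have hterm : ∀ l ∈ Finset.univ, w l - u l =
            (w l - u' l) + (if l = j then 1 else 0) := by
          intro l _
          by_cases h1 : l = i
          · subst h1
            rw [if_neg hij, hci]
            omega
          · by_cases h2 : l = j
            · subst h2
              rw [if_pos rfl, hcj]
              omega
            · rw [if_neg h2, hcl l h1 h2]
              omega
        have := Finset.sum_congr rfl hterm
        rw [Finset.sum_add_distrib, Finset.sum_ite_eq' Finset.univ j (fun _ => 1),
          if_pos (Finset.mem_univ j)] at this
        omega
      have hnrm' : nrm u' = nrm w := by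
        have h1 : u - Finsupp.single i 1 + Finsupp.single i 1 = u :=
          tsub_add_cancel_of_le (Finsupp.single_le_iff.mpr (by omega))
        have h2 : nrm (u - Finsupp.single i 1) + 1 = nrm u := by
          conv_rhs => rw [← h1]
          rw [nrm_add, nrm_single]
        have h3 : nrm u' = nrm (u - Finsupp.single i 1) + 1 := by
          rw [hu', nrm_add, nrm_single]
        omega
      exact ih (N - 1) (by omega) u' w hdec hu'mem hw0 hnrm'

/-- If a coefficient of a product of supported series is nonzero,
the degree is a sum of supported degrees. -/
lemma prod_coeff {R : Type*} [CommRing R] (U : Set (Fin n →₀ ℕ))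
    (g : Fin n → MvPowerSeries (Fin n) R) (hg : ∀ l, MvSupported U (g l)) :
    ∀ (k : ℕ) (e : Fin n → ℕ), (∑ l, e l) = k → ∀ d : Fin n →₀ ℕ,
      MvPowerSeries.coeff (R := R) d (∏ l, (g l) ^ (e l)) ≠ 0 →
      ∃ c : List (Fin n →₀ ℕ), c.length = k ∧ (∀ x ∈ c, x ∈ U) ∧ c.sum = d := by
  classical
  intro k
  induction k with
  | zero =>
    intro e he d hd
    have hz : ∀ l, e l = 0 := fun l =>
      Finset.sum_eq_zero_iff.mp he l (Finset.mem_univ l)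
    rw [Finset.prod_congr rfl (fun l _ => by rw [hz l, pow_zero]),
      Finset.prod_const_one, MvPowerSeries.coeff_one] at hd
    refine ⟨[], rfl, by simp, ?_⟩
    by_cases h : d = 0
    · simp [h]
    · rw [if_neg h] at hd; exact absurd rfl hd
  | succ k ih =>
    intro e he d hd
    have hex : ∃ i, e i ≠ 0 := by
      by_contra h
      push_neg at h
      rw [Finset.sum_eq_zero (fun l _ => h l)] at he
      omega
    obtain ⟨i, hi⟩ := hex
    set e' := Function.update e i (e i - 1) with he'
    have hpow : g i ^ e i = g i * g i ^ e' i := by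
      obtain ⟨m', hm'⟩ : ∃ m', e i = m' + 1 := ⟨e i - 1, by omega⟩
      rw [he', Function.update_self, hm']
      simp [pow_succ']
    have hsplit : (∏ l, (g l) ^ (e l)) = g i * ∏ l, (g l) ^ (e' l) := by
      rw [← Finset.mul_prod_erase Finset.univ (fun l => g l ^ e l) (Finset.mem_univ i),
          ← Finset.mul_prod_erase Finset.univ (fun l => g l ^ e' l) (Finset.mem_univ i),
          ← mul_assoc]
      rw [hpow]
      congr 1
      apply Finset.prod_congr rfl
      intro l hl
      rw [he', Function.update_of_ne (Finset.mem_erase.mp hl).1]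
    rw [hsplit, MvPowerSeries.coeff_mul] at hd
    obtain ⟨p, hp, hpne⟩ := Finset.exists_ne_zero_of_sum_ne_zero hd
    have h1 : MvPowerSeries.coeff (R := R) p.1 (g i) ≠ 0 := fun h => hpne (by rw [h, zero_mul])
    have h2 : MvPowerSeries.coeff (R := R) p.2 (∏ l, (g l) ^ (e' l)) ≠ 0 :=
      fun h => hpne (by rw [h, mul_zero])
    have hsum' : (∑ l, e' l) = k := by
      have ha : ∑ l, e l = e i + ∑ l ∈ Finset.univ.erase i, e l :=
        (Finset.add_sum_erase Finset.univ e (Finset.mem_univ i)).symm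
      have hb : ∑ l, e' l = e' i + ∑ l ∈ Finset.univ.erase i, e' l :=
        (Finset.add_sum_erase Finset.univ e' (Finset.mem_univ i)).symm
      have hc : ∑ l ∈ Finset.univ.erase i, e' l = ∑ l ∈ Finset.univ.erase i, e l := by
        apply Finset.sum_congr rfl
        intro l hl
        rw [he', Function.update_of_ne (Finset.mem_erase.mp hl).1]
      have hd' : e' i = e i - 1 := by rw [he', Function.update_self]
      omega
    obtain ⟨c, hc1, hc2, hc3⟩ := ih e' hsum' p.2 h2
    refine ⟨p.1 :: c, by simp [hc1], ?_, ?_⟩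
    · intro x hx
      rcases List.mem_cons.mp hx with rfl | hx
      · exact hg i p.1 h1
      · exact hc2 x hx
    · rw [List.sum_cons, hc3]
      exact Finset.HasAntidiagonal.mem_antidiagonal.mp hp

/-- Sums of elements of a strongly closed set. -/
lemma sum_mem {T : Set ℕ} (hT : StronglyClosed T) :
    ∀ c : List ℕ, (∀ x ∈ c, x ∈ T) → ∀ a ∈ T, a + c.sum - c.length ∈ T := by
  intro c
  induction c with
  | nil => intro _ a ha; simpa using ha
  | cons x c ih =>
    intro hc a ha
    have hx : x ∈ T := hc x (List.mem_cons_self)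
    have hax : a + x - 1 ∈ T := hT.2.2 a ha x hx
    have hres := ih (fun y hy => hc y (List.mem_cons_of_mem x hy)) _ hax
    have h1 : 1 ≤ a := hT.1 a ha
    have h2 : 1 ≤ x := hT.1 x hx
    have heq : a + (x :: c).sum - (x :: c).length = (a + x - 1) + c.sum - c.length := by
      simp only [List.sum_cons, List.length_cons]
      omega
    rwa [heq]

end Stmt14Aux

theorem stmt14 (n : ℕ) (hn : 2 ≤ n) (U : Set (Fin n →₀ ℕ)) (hU : ∀ u ∈ U, u ≠ 0) :
    (∀ (R : Type) [CommRing R],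
      (∀ i, MvSupported (R := R) U (MvPowerSeries.X i)) ∧
      ∀ f g : Fin n → MvPowerSeries (Fin n) R,
        (∀ i, MvSupported U (f i)) → (∀ i, MvSupported U (g i)) →
        ∀ i, MvSupported U (mvComp (f i) g)) ↔
    (StronglyClosed ((fun u : Fin n →₀ ℕ => u.sum fun _ m => m) '' U) ∧
      U = {u : Fin n →₀ ℕ | u ≠ 0 ∧
        (u.sum fun _ m => m) ∈ (fun u : Fin n →₀ ℕ => u.sum fun _ m => m) '' U}) := by
  classical
  have hTdef : ((fun u : Fin n →₀ ℕ => u.sum fun _ m => m) '' U) = Stmt14Aux.nrm '' U := rfl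
  constructor
  · intro h
    obtain ⟨hX, hcomp⟩ := h ℤ
    have hXU : ∀ l : Fin n, Finsupp.single l 1 ∈ U := by
      intro l
      apply hX l
      rw [MvPowerSeries.coeff_X, if_pos rfl]
      exact one_ne_zero
    have hpos : ∀ t ∈ Stmt14Aux.nrm '' U, 0 < t := by
      rintro t ⟨u, hu, rfl⟩
      have h0 : Stmt14Aux.nrm u ≠ 0 := fun h => hU u hu (Stmt14Aux.nrm_eq_zero.mp h)
      omega
    have h1T : (1 : ℕ) ∈ Stmt14Aux.nrm '' U :=
      ⟨Finsupp.single ⟨0, by omega⟩ 1, hXU _, Stmt14Aux.nrm_single _ 1⟩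
    have hclosed : ∀ s ∈ Stmt14Aux.nrm '' U, ∀ t ∈ Stmt14Aux.nrm '' U,
        s + t - 1 ∈ Stmt14Aux.nrm '' U := by
      rintro s ⟨u, hu, rfl⟩ t ⟨v, hv, rfl⟩
      have hu0 := hU u hu
      have hex : ∃ i, u i ≠ 0 := by
        by_contra hh
        push_neg at hh
        exact hu0 (by ext l; simp [hh l])
      obtain ⟨i, hi⟩ := hex
      have hv0 := hU v hv
      have hd := Stmt14Aux.move U hcomp hXU i hu hv hv0 (by omega)
      refine ⟨_, hd, ?_⟩
      have h1 : u - Finsupp.single i 1 + Finsupp.single i 1 = u :=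
        tsub_add_cancel_of_le (Finsupp.single_le_iff.mpr (by omega))
      have h2 : Stmt14Aux.nrm (u - Finsupp.single i 1) + 1 = Stmt14Aux.nrm u := by
        conv_rhs => rw [← h1]
        rw [Stmt14Aux.nrm_add, Stmt14Aux.nrm_single]
      have h3 := Stmt14Aux.nrm_add (u - Finsupp.single i 1) v
      have h4 : Stmt14Aux.nrm v ≠ 0 := fun hh => hv0 (Stmt14Aux.nrm_eq_zero.mp hh)
      show Stmt14Aux.nrm (u - Finsupp.single i 1 + v)
        = Stmt14Aux.nrm u + Stmt14Aux.nrm v - 1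
      omega
    rw [hTdef]
    refine ⟨⟨hpos, h1T, hclosed⟩, ?_⟩
    ext w
    simp only [Set.mem_setOf_eq]
    constructor
    · intro hw
      exact ⟨hU w hw, ⟨w, hw, rfl⟩⟩
    · rintro ⟨hw0, u, hu, hnrm⟩
      exact Stmt14Aux.reach U hcomp hXU (∑ l, (w l - u l)) u w rfl hu hw0 hnrm
  · rintro ⟨hSC, hUeq⟩
    obtain ⟨hpos, h1T, hclosed⟩ := hSC
    intro R _
    constructor
    · intro i d hd
      rw [MvPowerSeries.coeff_X] at hd
      have hdi : d = Finsupp.single i 1 := by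
        by_contra hh
        rw [if_neg hh] at hd
        exact hd rfl
      rw [hUeq, hdi]
      refine ⟨Stmt14Aux.single_one_ne_zero i, ?_⟩
      show Stmt14Aux.nrm (Finsupp.single i 1) ∈ _
      rw [Stmt14Aux.nrm_single]
      exact h1T
    · intro f g hf hg i d hd
      have hd' : (∑ e ∈ Finset.Iic (Finsupp.equivFunOnFinite.symm
            fun _ => d.sum fun _ m => m),
          (MvPowerSeries.coeff (R := R) e (f i)) *
            MvPowerSeries.coeff (R := R) d (∏ l, (g l) ^ (e l))) ≠ 0 := hd
      obtain ⟨e, he, hene⟩ := Finset.exists_ne_zero_of_sum_ne_zero hd'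
      have h1 : MvPowerSeries.coeff (R := R) e (f i) ≠ 0 :=
        fun hh => hene (by rw [hh, zero_mul])
      have h2 : MvPowerSeries.coeff (R := R) d (∏ l, (g l) ^ (e l)) ≠ 0 :=
        fun hh => hene (by rw [hh, mul_zero])
      have heU : e ∈ U := hf i e h1
      obtain ⟨c, hc1, hc2, hc3⟩ :=
        Stmt14Aux.prod_coeff U g hg (∑ l, e l) (fun l => e l) rfl d h2
      have hnrmd : Stmt14Aux.nrm d = (c.map Stmt14Aux.nrm).sum := by
        rw [← hc3, Stmt14Aux.nrm_list_sum]
      have hmemT : ∀ x ∈ c.map Stmt14Aux.nrm, x ∈ Stmt14Aux.nrm '' U := by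
        intro x hx
        obtain ⟨y, hy, rfl⟩ := List.mem_map.mp hx
        exact ⟨y, hc2 y hy, rfl⟩
      have heT : Stmt14Aux.nrm e ∈ Stmt14Aux.nrm '' U := ⟨e, heU, rfl⟩
      have hsm := Stmt14Aux.sum_mem ⟨hpos, h1T, hclosed⟩
        (c.map Stmt14Aux.nrm) hmemT _ heT
      have hlen : (c.map Stmt14Aux.nrm).length = Stmt14Aux.nrm e := by
        rw [List.length_map, hc1, Stmt14Aux.nrm_eq_sum]
      have hfinal : Stmt14Aux.nrm d ∈ Stmt14Aux.nrm '' U := by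
        have heq2 : Stmt14Aux.nrm e + (c.map Stmt14Aux.nrm).sum -
            (c.map Stmt14Aux.nrm).length = Stmt14Aux.nrm d := by
          rw [hlen, hnrmd]
          omega
        rwa [heq2] at hsm
      rw [hUeq]
      refine ⟨?_, hfinal⟩
      intro h0
      have hp := hpos _ hfinal
      rw [h0, Stmt14Aux.nrm_zero] at hp
      omega
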